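/- Under the model rollout setup, consider a second model rollout (s̄_i, ā_i) generated by the same policy π and model f̂ from a (possibly different) constant initial state s̄₀ ∈ S. Then for every i ≥ 1 and every θ ∈ Θ, ‖D_θ â_i(θ) − D_θ ā_i(θ)‖ ≤ L_π · ( 2M·K̂(i−1) + 2·L_f̂·L_θ ) · ∑_{j=0}^{i−1} M^j + 2·L_π·K̂(i) + 2·L_θ, where M = L_f̂·(1 + L_π) and K̂(i) = (1 + L_π)·L_f̂·L_θ·∑_{j=0}^{i−1} M^j + L_θ. -/

import Mathlib

open Finset

/-- Model rollout: states `ŝ_i : Θ → S` generated from the constant initial state `s₀`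
by `ŝ₀(θ) = s₀`, `ŝ_{i+1}(θ) = f(ŝ_i(θ), π(θ, ŝ_i(θ)))`. -/
def sHat {Θ S A : Type*} (π : Θ × S → A) (f : S × A → S) (s₀ : S) : ℕ → Θ → S
  | 0 => fun _ => s₀
  | (i + 1) => fun θ => f (sHat π f s₀ i θ, π (θ, sHat π f s₀ i θ))

/-- Model rollout: actions `â_i(θ) = π(θ, ŝ_i(θ))`. -/
def aHat {Θ S A : Type*} (π : Θ × S → A) (f : S × A → S) (s₀ : S) (i : ℕ) : Θ → A :=
  fun θ => π (θ, sHat π f s₀ i θ)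

/-- `K̂(i) = (1 + L_π) · L_f̂ · L_θ · ∑_{j=0}^{i−1} (L_f̂ (1 + L_π))^j + L_θ`. -/
noncomputable def Khat (Lπ Lf Lθ : ℝ) (i : ℕ) : ℝ :=
  (1 + Lπ) * Lf * Lθ * ∑ j ∈ Finset.range i, (Lf * (1 + Lπ)) ^ j + Lθ

/-!
By the chain rule, `‖Dŝ_{i+1}‖ ≤ L_f̂ ‖Dŝ_i‖ + L_f̂ ‖Dâ_i‖` and `‖Dâ_i‖ ≤ L_θ + L_π ‖Dŝ_i‖`, so
`‖Dŝ_i‖ ≤ L_f̂ L_θ ∑_{j<i} M^j ≤ K̂(i)` and each rollout has `‖Dâ_i‖ ≤ L_θ + L_π K̂(i)`.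
The difference of the two action derivatives is then bounded by the triangle inequality.
-/

theorem norm_fderiv_comp_prodMk_le {X E F G : Type*}
    [NormedAddCommGroup X] [NormedSpace ℝ X] [NormedAddCommGroup E] [NormedSpace ℝ E]
    [NormedAddCommGroup F] [NormedSpace ℝ F] [NormedAddCommGroup G] [NormedSpace ℝ G]
    {g : E × F → G} {φ : X → E} {ψ : X → F} {x : X} {La Lb : ℝ}
    (hg : DifferentiableAt ℝ g (φ x, ψ x)) (hφ : DifferentiableAt ℝ φ x)
    (hψ : DifferentiableAt ℝ ψ x)
    (ha : ‖fderiv ℝ (fun e => g (e, ψ x)) (φ x)‖ ≤ La)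
    (hb : ‖fderiv ℝ (fun y => g (φ x, y)) (ψ x)‖ ≤ Lb) :
    ‖fderiv ℝ (fun x => g (φ x, ψ x)) x‖ ≤ La * ‖fderiv ℝ φ x‖ + Lb * ‖fderiv ℝ ψ x‖ := by
  set L := fderiv ℝ g (φ x, ψ x)
  have hL₁ : fderiv ℝ (fun e => g (e, ψ x)) (φ x) = L.comp (.inl ℝ E F) :=
    (hg.hasFDerivAt.comp (φ x) (hasFDerivAt_prodMk_left (φ x) (ψ x))).fderiv
  have hL₂ : fderiv ℝ (fun y => g (φ x, y)) (ψ x) = L.comp (.inr ℝ E F) :=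
    (hg.hasFDerivAt.comp (ψ x) (hasFDerivAt_prodMk_right (φ x) (ψ x))).fderiv
  have hchain : fderiv ℝ (fun x => g (φ x, ψ x)) x =
      (L.comp (.inl ℝ E F)).comp (fderiv ℝ φ x) + (L.comp (.inr ℝ E F)).comp (fderiv ℝ ψ x) := by
    refine (hg.hasFDerivAt.comp x (hφ.hasFDerivAt.prodMk hψ.hasFDerivAt)).fderiv.trans ?_
    ext v
    simp [L, ← map_add]
  rw [hchain, ← hL₁, ← hL₂]
  refine (norm_add_le _ _).trans (add_le_add ?_ ?_)
  · exact (ContinuousLinearMap.opNorm_comp_le _ _).trans (by gcongr)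
  · exact (ContinuousLinearMap.opNorm_comp_le _ _).trans (by gcongr)

theorem mul_sum_pow_le_Khat {Lπ Lf Lθ : ℝ} (hLπ : 0 ≤ Lπ) (hLf : 0 ≤ Lf) (hLθ : 0 ≤ Lθ) (i : ℕ) :
    Lf * Lθ * ∑ j ∈ range i, (Lf * (1 + Lπ)) ^ j ≤ Khat Lπ Lf Lθ i := by
  have : 0 ≤ Lπ * (Lf * Lθ * ∑ j ∈ range i, (Lf * (1 + Lπ)) ^ j) := by positivity
  unfold Khat
  linarith

section Rollout

variable {Θ S A : Type*} [NormedAddCommGroup Θ] [NormedSpace ℝ Θ]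
  [NormedAddCommGroup S] [NormedSpace ℝ S] [NormedAddCommGroup A] [NormedSpace ℝ A]
  {π : Θ × S → A} {f : S × A → S} {s₀ : S} {Lθ Lπ Lf : ℝ}

theorem differentiable_sHat (hπ : Differentiable ℝ π) (hf : Differentiable ℝ f) (i : ℕ) :
    Differentiable ℝ (sHat π f s₀ i) := by
  induction i with
  | zero => exact differentiable_const s₀
  | succ i ih => exact hf.comp (ih.prodMk (hπ.comp (differentiable_id.prodMk ih)))

theorem differentiable_aHat (hπ : Differentiable ℝ π) (hf : Differentiable ℝ f) (i : ℕ) :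
    Differentiable ℝ (aHat π f s₀ i) :=
  hπ.comp (differentiable_id.prodMk (differentiable_sHat hπ hf i))

theorem norm_fderiv_aHat_le (hπ : Differentiable ℝ π) (hf : Differentiable ℝ f)
    (hπθ : ∀ p : Θ × S, ‖fderiv ℝ (fun θ : Θ => π (θ, p.2)) p.1‖ ≤ Lθ)
    (hπs : ∀ p : Θ × S, ‖fderiv ℝ (fun s : S => π (p.1, s)) p.2‖ ≤ Lπ) (i : ℕ) (θ : Θ) :
    ‖fderiv ℝ (aHat π f s₀ i) θ‖ ≤ Lθ + Lπ * ‖fderiv ℝ (sHat π f s₀ i) θ‖ := by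
  have hLθ : 0 ≤ Lθ := (norm_nonneg _).trans (hπθ 0)
  calc ‖fderiv ℝ (aHat π f s₀ i) θ‖
      ≤ Lθ * ‖fderiv ℝ id θ‖ + Lπ * ‖fderiv ℝ (sHat π f s₀ i) θ‖ :=
        norm_fderiv_comp_prodMk_le (g := π) (φ := id) (ψ := sHat π f s₀ i) (hπ _) differentiableAt_id
          (differentiable_sHat hπ hf i θ) (hπθ (θ, sHat π f s₀ i θ)) (hπs (θ, sHat π f s₀ i θ))
    _ ≤ Lθ + Lπ * ‖fderiv ℝ (sHat π f s₀ i) θ‖ := by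
        rw [fderiv_id]
        gcongr
        exact mul_le_of_le_one_right hLθ ContinuousLinearMap.norm_id_le

theorem norm_fderiv_sHat_succ_le (hπ : Differentiable ℝ π) (hf : Differentiable ℝ f)
    (hfs : ∀ p : S × A, ‖fderiv ℝ (fun s : S => f (s, p.2)) p.1‖ ≤ Lf)
    (hfa : ∀ p : S × A, ‖fderiv ℝ (fun a : A => f (p.1, a)) p.2‖ ≤ Lf) (i : ℕ) (θ : Θ) :
    ‖fderiv ℝ (sHat π f s₀ (i + 1)) θ‖ ≤
      Lf * ‖fderiv ℝ (sHat π f s₀ i) θ‖ + Lf * ‖fderiv ℝ (aHat π f s₀ i) θ‖ :=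
  norm_fderiv_comp_prodMk_le (g := f) (φ := sHat π f s₀ i) (ψ := aHat π f s₀ i) (hf _) (differentiable_sHat hπ hf i θ)
    (differentiable_aHat hπ hf i θ) (hfs (sHat π f s₀ i θ, aHat π f s₀ i θ))
    (hfa (sHat π f s₀ i θ, aHat π f s₀ i θ))

theorem norm_fderiv_sHat_le (hπ : Differentiable ℝ π) (hf : Differentiable ℝ f)
    (hπθ : ∀ p : Θ × S, ‖fderiv ℝ (fun θ : Θ => π (θ, p.2)) p.1‖ ≤ Lθ)
    (hπs : ∀ p : Θ × S, ‖fderiv ℝ (fun s : S => π (p.1, s)) p.2‖ ≤ Lπ)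
    (hfs : ∀ p : S × A, ‖fderiv ℝ (fun s : S => f (s, p.2)) p.1‖ ≤ Lf)
    (hfa : ∀ p : S × A, ‖fderiv ℝ (fun a : A => f (p.1, a)) p.2‖ ≤ Lf) (i : ℕ) (θ : Θ) :
    ‖fderiv ℝ (sHat π f s₀ i) θ‖ ≤ Lf * Lθ * ∑ j ∈ range i, (Lf * (1 + Lπ)) ^ j := by
  have hLπ : 0 ≤ Lπ := (norm_nonneg _).trans (hπs 0)
  have hLf : 0 ≤ Lf := (norm_nonneg _).trans (hfs 0)
  induction i with
  | zero => simp [sHat]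
  | succ i ih =>
    set B := Lf * Lθ * ∑ j ∈ range i, (Lf * (1 + Lπ)) ^ j
    calc ‖fderiv ℝ (sHat π f s₀ (i + 1)) θ‖
        ≤ Lf * ‖fderiv ℝ (sHat π f s₀ i) θ‖ +
            Lf * (Lθ + Lπ * ‖fderiv ℝ (sHat π f s₀ i) θ‖) :=
          (norm_fderiv_sHat_succ_le hπ hf hfs hfa i θ).trans
            (by gcongr; exact norm_fderiv_aHat_le hπ hf hπθ hπs i θ)
      _ ≤ Lf * B + Lf * (Lθ + Lπ * B) := by gcongr
      _ = Lf * Lθ * ∑ j ∈ range (i + 1), (Lf * (1 + Lπ)) ^ j := by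
          rw [geom_sum_succ]
          ring

theorem norm_fderiv_aHat_le_Khat (hπ : Differentiable ℝ π) (hf : Differentiable ℝ f)
    (hπθ : ∀ p : Θ × S, ‖fderiv ℝ (fun θ : Θ => π (θ, p.2)) p.1‖ ≤ Lθ)
    (hπs : ∀ p : Θ × S, ‖fderiv ℝ (fun s : S => π (p.1, s)) p.2‖ ≤ Lπ)
    (hfs : ∀ p : S × A, ‖fderiv ℝ (fun s : S => f (s, p.2)) p.1‖ ≤ Lf)
    (hfa : ∀ p : S × A, ‖fderiv ℝ (fun a : A => f (p.1, a)) p.2‖ ≤ Lf) (i : ℕ) (θ : Θ) :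
    ‖fderiv ℝ (aHat π f s₀ i) θ‖ ≤ Lθ + Lπ * Khat Lπ Lf Lθ i := by
  have hLθ : 0 ≤ Lθ := (norm_nonneg _).trans (hπθ 0)
  have hLπ : 0 ≤ Lπ := (norm_nonneg _).trans (hπs 0)
  have hLf : 0 ≤ Lf := (norm_nonneg _).trans (hfs 0)
  refine (norm_fderiv_aHat_le hπ hf hπθ hπs i θ).trans ?_
  gcongr
  exact (norm_fderiv_sHat_le hπ hf hπθ hπs hfs hfa i θ).trans (mul_sum_pow_le_Khat hLπ hLf hLθ i)

end Rollout

/-- **Stability of pathwise action derivatives w.r.t. the initial condition** (Lemma B.2,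
action part). Two model rollouts with the same policy and model started from `s₀` and
`s̄₀` satisfy, for `i ≥ 1`,
`‖D_θ â_i(θ) − D_θ ā_i(θ)‖ ≤ L_π (2 M K̂(i−1) + 2 L_f̂ L_θ) ∑_{j<i} M^j
  + 2 L_π K̂(i) + 2 L_θ`, `M = L_f̂ (1 + L_π)`. -/
theorem stmt6 {Θ S A : Type*}
    [NormedAddCommGroup Θ] [NormedSpace ℝ Θ]
    [NormedAddCommGroup S] [NormedSpace ℝ S]
    [NormedAddCommGroup A] [NormedSpace ℝ A]
    (π : Θ × S → A) (f : S × A → S) (s₀ sbar₀ : S)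
    (Lθ Lπ Lf : ℝ)
    (hπdiff : Differentiable ℝ π)
    (hπθ : ∀ p : Θ × S, ‖fderiv ℝ (fun θ : Θ => π (θ, p.2)) p.1‖ ≤ Lθ)
    (hπs : ∀ p : Θ × S, ‖fderiv ℝ (fun s : S => π (p.1, s)) p.2‖ ≤ Lπ)
    (hfdiff : Differentiable ℝ f)
    (hfs : ∀ p : S × A, ‖fderiv ℝ (fun s : S => f (s, p.2)) p.1‖ ≤ Lf)
    (hfa : ∀ p : S × A, ‖fderiv ℝ (fun a : A => f (p.1, a)) p.2‖ ≤ Lf) :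
    ∀ i : ℕ, 1 ≤ i → ∀ θ : Θ,
      ‖fderiv ℝ (aHat π f s₀ i) θ - fderiv ℝ (aHat π f sbar₀ i) θ‖ ≤
        Lπ * ((2 * (Lf * (1 + Lπ)) * Khat Lπ Lf Lθ (i - 1) + 2 * Lf * Lθ) *
            ∑ j ∈ Finset.range i, (Lf * (1 + Lπ)) ^ j) +
          2 * Lπ * Khat Lπ Lf Lθ i + 2 * Lθ := by
  intro i _ θ
  have hLθ : 0 ≤ Lθ := (norm_nonneg _).trans (hπθ 0)
  have hLπ : 0 ≤ Lπ := (norm_nonneg _).trans (hπs 0)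
  have hLf : 0 ≤ Lf := (norm_nonneg _).trans (hfs 0)
  have hK : 0 ≤ Khat Lπ Lf Lθ (i - 1) := by unfold Khat; positivity
  have hrest : 0 ≤ Lπ * ((2 * (Lf * (1 + Lπ)) * Khat Lπ Lf Lθ (i - 1) + 2 * Lf * Lθ) *
      ∑ j ∈ Finset.range i, (Lf * (1 + Lπ)) ^ j) := by positivity
  have ha := norm_fderiv_aHat_le_Khat (s₀ := s₀) hπdiff hfdiff hπθ hπs hfs hfa i θ
  have hā := norm_fderiv_aHat_le_Khat (s₀ := sbar₀) hπdiff hfdiff hπθ hπs hfs hfa i θ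
  calc ‖fderiv ℝ (aHat π f s₀ i) θ - fderiv ℝ (aHat π f sbar₀ i) θ‖
      ≤ ‖fderiv ℝ (aHat π f s₀ i) θ‖ + ‖fderiv ℝ (aHat π f sbar₀ i) θ‖ := norm_sub_le _ _
    _ ≤ _ := by linarith
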